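/- arXiv:1905.01082 — 5 statements merged into one kernel-verified Lean document; each statement's English description precedes it below -/
import Mathlib

section
/- Let n ≥ 1 and let E, A ∈ ℝ^{n×n}. If E is symmetric positive definite and A + Aᵀ is negative definite (i.e., the system (E, A) is dissipative), then every eigenvalue of the matrix pencil (E, A) has negative real part, i.e., every λ ∈ ℂ with det(λ·E − A) = 0 (entries coerced to ℂ) satisfies Re(λ) < 0. -/
/-!
If `(λE - A)v = 0` with `v ≠ 0`, then `λ · v*Ev = v*Av`. Since `E` is real symmetric positive
definite, `v*Ev` is real and positive; and the real part of `v*Av` splits into the real quadratic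
forms of `A` at `Re v` and `Im v`, which equals half those of `A + Aᵀ` and is therefore negative.
Taking real parts gives `Re λ · v*Ev < 0`.
-/

open Matrix

section RealMatrixOverComplex

variable {ι : Type*} [Fintype ι]

lemma Matrix.re_star_dotProduct_map_ofReal_mulVec (M : Matrix ι ι ℝ) (v : ι → ℂ) :
    (star v ⬝ᵥ M.map Complex.ofReal *ᵥ v).re =
      (fun i ↦ (v i).re) ⬝ᵥ M *ᵥ (fun i ↦ (v i).re) +
        (fun i ↦ (v i).im) ⬝ᵥ M *ᵥ (fun i ↦ (v i).im) := by
  simp only [dotProduct, mulVec, map_apply, Pi.star_apply, Complex.star_def, Complex.re_sum,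
    Complex.mul_re, Complex.mul_im, Complex.conj_re, Complex.conj_im, Complex.ofReal_re,
    Complex.ofReal_im, Finset.mul_sum, ← Finset.sum_add_distrib]
  exact Finset.sum_congr rfl fun i _ ↦ Finset.sum_congr rfl fun j _ ↦ by ring

lemma Matrix.PosDef.re_star_dotProduct_map_ofReal_mulVec_pos {M : Matrix ι ι ℝ} (hM : M.PosDef)
    {v : ι → ℂ} (hv : v ≠ 0) : 0 < (star v ⬝ᵥ M.map Complex.ofReal *ᵥ v).re := by
  rw [re_star_dotProduct_map_ofReal_mulVec]
  have hre := hM.posSemidef.dotProduct_mulVec_nonneg (fun i ↦ (v i).re)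
  have him := hM.posSemidef.dotProduct_mulVec_nonneg (fun i ↦ (v i).im)
  simp only [star_trivial] at hre him
  have hparts : (fun i ↦ (v i).re) ≠ 0 ∨ (fun i ↦ (v i).im) ≠ 0 := by
    by_contra! h
    exact hv (funext fun i ↦ Complex.ext (congr_fun h.1 i) (congr_fun h.2 i))
  rcases hparts with hre_ne | him_ne
  · exact add_pos_of_pos_of_nonneg (by simpa using hM.dotProduct_mulVec_pos hre_ne) him
  · exact add_pos_of_nonneg_of_pos hre (by simpa using hM.dotProduct_mulVec_pos him_ne)

lemma Matrix.dotProduct_neg_add_transpose_mulVec (A : Matrix ι ι ℝ) (x : ι → ℝ) :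
    x ⬝ᵥ (-(A + Aᵀ)) *ᵥ x = -2 * (x ⬝ᵥ A *ᵥ x) := by
  rw [neg_mulVec, add_mulVec, dotProduct_neg, dotProduct_add, dotProduct_transpose_mulVec]
  ring

lemma Matrix.re_star_dotProduct_map_ofReal_mulVec_neg {A : Matrix ι ι ℝ}
    (hA : (-(A + Aᵀ)).PosDef) {v : ι → ℂ} (hv : v ≠ 0) :
    (star v ⬝ᵥ A.map Complex.ofReal *ᵥ v).re < 0 := by
  have h := hA.re_star_dotProduct_map_ofReal_mulVec_pos hv
  rw [re_star_dotProduct_map_ofReal_mulVec, dotProduct_neg_add_transpose_mulVec,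
    dotProduct_neg_add_transpose_mulVec] at h
  rw [re_star_dotProduct_map_ofReal_mulVec]
  linarith

end RealMatrixOverComplex

lemma Matrix.exists_smul_mulVec_eq_mulVec_of_det_smul_sub_eq_zero {ι K : Type*} [Fintype ι]
    [DecidableEq ι] [Field K] {E A : Matrix ι ι K} {lam : K} (h : (lam • E - A).det = 0) :
    ∃ v ≠ 0, lam • (E *ᵥ v) = A *ᵥ v := by
  obtain ⟨v, hv, hker⟩ := exists_mulVec_eq_zero_iff.mpr h
  rw [sub_mulVec, smul_mulVec, sub_eq_zero] at hker
  exact ⟨v, hv, hker⟩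

theorem stmt_0_general {n : ℕ} (E A : Matrix (Fin n) (Fin n) ℝ)
    (hE : E.PosDef) (hA : (-(A + Aᵀ)).PosDef) :
    ∀ lam : ℂ,
      (lam • E.map (Complex.ofReal) - A.map (Complex.ofReal)).det = 0 →
      lam.re < 0 := by
  intro lam hdet
  obtain ⟨v, hv, hpencil⟩ := exists_smul_mulVec_eq_mulVec_of_det_smul_sub_eq_zero hdet
  have hrayleigh : lam * (star v ⬝ᵥ E.map Complex.ofReal *ᵥ v) =
      star v ⬝ᵥ A.map Complex.ofReal *ᵥ v := by
    rw [← hpencil, dotProduct_smul, smul_eq_mul]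
  have hE_herm : (E.map Complex.ofReal).IsHermitian :=
    hE.isHermitian.map _ fun x ↦ (Complex.conj_ofReal x).symm
  have hE_im : (star v ⬝ᵥ E.map Complex.ofReal *ᵥ v).im = 0 :=
    hE_herm.im_star_dotProduct_mulVec_self v
  have hre := congrArg Complex.re hrayleigh
  rw [Complex.mul_re, hE_im, mul_zero, sub_zero] at hre
  exact neg_of_mul_neg_left (hre ▸ re_star_dotProduct_map_ofReal_mulVec_neg hA hv)
    (hE.re_star_dotProduct_map_ofReal_mulVec_pos hv).le

/-- If `E` is symmetric positive definite and `A + Aᵀ` is negative definite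
(the system `(E, A)` is dissipative), then every eigenvalue of the matrix
pencil `(E, A)` has negative real part. -/
theorem stmt_0 {n : ℕ} (hn : 1 ≤ n) (E A : Matrix (Fin n) (Fin n) ℝ)
    (hE : E.PosDef) (hA : (-(A + Aᵀ)).PosDef) :
    ∀ lam : ℂ,
      (lam • E.map (Complex.ofReal) - A.map (Complex.ofReal)).det = 0 →
      lam.re < 0 :=
  stmt_0_general E A hE hA
end

section
/- Let E, A ∈ ℝ^{n×n} with E symmetric positive definite and A + Aᵀ negative definite, and let V ∈ ℝ^{n×r} have full column rank r (1 ≤ r ≤ n). Then the Galerkin-reduced matrices Ē = Vᵀ E V and Ā = Vᵀ A V satisfy: Ē is symmetric positive definite, Ā + Āᵀ is negative definite, and consequently every eigenvalue λ ∈ ℂ of the reduced matrix pencil (Ē, Ā) (i.e., every λ with det(λ·Ē − Ā) = 0 over ℂ) has negative real part. -/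
open Matrix
open scoped ComplexOrder

/-!
Congruence by a matrix `V` with injective `V *ᵥ ·` preserves positive definiteness, so both
`E` and `-(A + Aᵀ)` stay positive definite after the reduction. If `(λ Ē - Ā) z = 0` with
`z ≠ 0`, then `λ (z* Ē z) = z* Ā z`, where `z* Ē z > 0` and
`2 Re (z* Ā z) = -z* (-(Ā + Āᵀ)) z < 0`; hence `Re λ < 0`.
-/

namespace Matrix

variable {m n : Type*} [Fintype n]

theorem mulVec_injective_of_rank_eq_card {R : Type*} [Field R] {V : Matrix m n R}
    (hV : V.rank = Fintype.card n) : Function.Injective V.mulVec :=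
  mulVec_injective_iff.mpr <| linearIndependent_iff_card_eq_finrank_span.mpr <| by
    rw [Set.finrank, ← rank_eq_finrank_span_cols, hV]

theorem re_star_dotProduct_map_ofReal_mulVec_s2 (P : Matrix n n ℝ) (z : n → ℂ) :
    (star z ⬝ᵥ P.map Complex.ofReal *ᵥ z).re
      = (fun i ↦ (z i).re) ⬝ᵥ P *ᵥ (fun i ↦ (z i).re)
        + (fun i ↦ (z i).im) ⬝ᵥ P *ᵥ (fun i ↦ (z i).im) := by
  simp only [dotProduct, mulVec, map_apply, Pi.star_apply, Finset.mul_sum,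
    Complex.re_sum, ← Finset.sum_add_distrib]
  refine Finset.sum_congr rfl fun i _ ↦ Finset.sum_congr rfl fun j _ ↦ ?_
  simp only [Complex.star_def, Complex.mul_re, Complex.mul_im, Complex.conj_re,
    Complex.conj_im, Complex.ofReal_re, Complex.ofReal_im]
  ring

theorem PosDef.map_ofReal {P : Matrix n n ℝ} (hP : P.PosDef) :
    (P.map Complex.ofReal).PosDef := by
  have hH : (P.map Complex.ofReal).IsHermitian :=
    hP.isHermitian.map _ fun x ↦ (Complex.conj_ofReal x).symm
  refine PosDef.of_dotProduct_mulVec_pos hH fun z hz ↦ RCLike.pos_iff.mpr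
    ⟨?_, hH.im_star_dotProduct_mulVec_self z⟩
  have hq (v : n → ℝ) : 0 ≤ v ⬝ᵥ P *ᵥ v := by
    simpa using hP.posSemidef.dotProduct_mulVec_nonneg v
  have hq' {v : n → ℝ} (hv : v ≠ 0) : 0 < v ⬝ᵥ P *ᵥ v := by
    simpa using hP.dotProduct_mulVec_pos hv
  change 0 < (star z ⬝ᵥ P.map Complex.ofReal *ᵥ z).re
  rw [re_star_dotProduct_map_ofReal_mulVec_s2]
  by_cases hre : (fun i ↦ (z i).re) = 0
  · have him : (fun i ↦ (z i).im) ≠ 0 := fun him ↦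
      hz <| funext fun i ↦ Complex.ext (congrFun hre i) (congrFun him i)
    exact add_pos_of_nonneg_of_pos (hq _) (hq' him)
  · exact add_pos_of_pos_of_nonneg (hq' hre) (hq _)

theorem star_dotProduct_conjTranspose_mulVec {R : Type*} [CommSemiring R] [StarRing R]
    (N : Matrix n n R) (z : n → R) :
    star z ⬝ᵥ Nᴴ *ᵥ z = star (star z ⬝ᵥ N *ᵥ z) := by
  rw [star_dotProduct, star_mulVec, conjTranspose_conjTranspose, ← dotProduct_mulVec]

variable {𝕜 : Type*} [RCLike 𝕜]

theorem re_star_dotProduct_mulVec_neg_of_posDef {N : Matrix n n 𝕜} (hN : (-(N + Nᴴ)).PosDef)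
    {z : n → 𝕜} (hz : z ≠ 0) : RCLike.re (star z ⬝ᵥ N *ᵥ z) < 0 := by
  have h := (RCLike.pos_iff.mp (hN.dotProduct_mulVec_pos hz)).1
  rw [neg_mulVec, add_mulVec, dotProduct_neg, dotProduct_add,
    star_dotProduct_conjTranspose_mulVec, map_neg, map_add, RCLike.star_def, RCLike.conj_re] at h
  linarith

theorem re_neg_of_det_smul_sub_eq_zero [DecidableEq n] {M N : Matrix n n 𝕜} (hM : M.PosDef)
    (hN : (-(N + Nᴴ)).PosDef) {μ : 𝕜} (hμ : (μ • M - N).det = 0) : RCLike.re μ < 0 := by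
  obtain ⟨z, hz, hzμ⟩ := exists_mulVec_eq_zero_iff.mpr hμ
  have heig : μ * (star z ⬝ᵥ M *ᵥ z) = star z ⬝ᵥ N *ᵥ z := by
    rw [sub_mulVec, smul_mulVec, sub_eq_zero] at hzμ
    rw [← hzμ, dotProduct_smul, smul_eq_mul]
  obtain ⟨hMre, hMim⟩ := RCLike.pos_iff.mp (hM.dotProduct_mulVec_pos hz)
  have hNre := re_star_dotProduct_mulVec_neg_of_posDef hN hz
  rw [← heig, RCLike.mul_re, hMim, mul_zero, sub_zero] at hNre
  exact neg_of_mul_neg_left hNre hMre.le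

def IsDissipative (E A : Matrix n n ℝ) : Prop :=
  E.PosDef ∧ (-(A + Aᵀ)).PosDef

namespace IsDissipative

variable {E A : Matrix n n ℝ}

theorem galerkin [Fintype m] (h : IsDissipative E A) {V : Matrix n m ℝ}
    (hV : Function.Injective V.mulVec) : IsDissipative (Vᵀ * E * V) (Vᵀ * A * V) := by
  have hcongr : -(Vᵀ * A * V + (Vᵀ * A * V)ᵀ) = Vᴴ * (-(A + Aᵀ)) * V := by
    simp only [conjTranspose_eq_transpose_of_trivial, transpose_mul, transpose_transpose,
      Matrix.mul_neg, Matrix.neg_mul, Matrix.mul_add, Matrix.add_mul, Matrix.mul_assoc]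
  rw [IsDissipative, hcongr, ← conjTranspose_eq_transpose_of_trivial]
  exact ⟨h.1.conjTranspose_mul_mul_same hV, h.2.conjTranspose_mul_mul_same hV⟩

theorem re_neg_of_det_eq_zero [DecidableEq n] (h : IsDissipative E A) {μ : ℂ}
    (hμ : (μ • E.map Complex.ofReal - A.map Complex.ofReal).det = 0) : μ.re < 0 := by
  have hA : (-(A.map Complex.ofReal + (A.map Complex.ofReal)ᴴ)).PosDef := by
    convert h.2.map_ofReal using 1
    ext i j
    simp
  exact re_neg_of_det_smul_sub_eq_zero h.1.map_ofReal hA hμ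

end IsDissipative

end Matrix

theorem stmt_2_general {n r : ℕ}
    (E A : Matrix (Fin n) (Fin n) ℝ)
    (hE : E.PosDef) (hA : (-(A + Aᵀ)).PosDef)
    (V : Matrix (Fin n) (Fin r) ℝ) (hV : V.rank = r) :
    (Vᵀ * E * V).PosDef ∧
    (-((Vᵀ * A * V) + (Vᵀ * A * V)ᵀ)).PosDef ∧
    ∀ lam : ℂ,
      (lam • (Vᵀ * E * V).map (Complex.ofReal)
        - (Vᵀ * A * V).map (Complex.ofReal)).det = 0 →
      lam.re < 0 := by
  have hred : IsDissipative (Vᵀ * E * V) (Vᵀ * A * V) :=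
    IsDissipative.galerkin ⟨hE, hA⟩ <|
      mulVec_injective_of_rank_eq_card <| hV.trans (Fintype.card_fin r).symm
  exact ⟨hred.1, hred.2, fun _ ↦ hred.re_neg_of_det_eq_zero⟩

/-- Galerkin-type reduction of a dissipative system is dissipative, hence the
reduced matrix pencil has only eigenvalues with negative real part. -/
theorem stmt_2 {n r : ℕ} (hr : 1 ≤ r) (hrn : r ≤ n)
    (E A : Matrix (Fin n) (Fin n) ℝ)
    (hE : E.PosDef) (hA : (-(A + Aᵀ)).PosDef)
    (V : Matrix (Fin n) (Fin r) ℝ) (hV : V.rank = r) :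
    (Vᵀ * E * V).PosDef ∧
    (-((Vᵀ * A * V) + (Vᵀ * A * V)ᵀ)).PosDef ∧
    ∀ lam : ℂ,
      (lam • (Vᵀ * E * V).map (Complex.ofReal)
        - (Vᵀ * A * V).map (Complex.ofReal)).det = 0 →
      lam.re < 0 :=
  stmt_2_general E A hE hA V hV
end

section
/- Let (𝓜, 𝔉, P) be a probability space, let Φ₁, …, Φ_m : 𝓜 → ℝ be square-integrable functions such that for every nonzero z ∈ ℝ^m the function Σ_{i=1}^m z_i Φ_i is nonzero on a set of positive P-measure, and let E : 𝓜 → ℝ^{n×n} be measurable with all entries of μ ↦ Φ_i(μ)Φ_j(μ)E(μ) integrable for all i, j, such that E(μ) is symmetric positive definite for P-almost every μ. Then the block matrix Ê ∈ ℝ^{mn×mn} whose (i,j)-th n×n block is Ê_{ij} = 𝔼[Φ_i Φ_j E] = ∫ Φ_i(μ) Φ_j(μ) E(μ) dP(μ) is symmetric positive definite. -/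
open Matrix MeasureTheory
open scoped Kronecker

/-!
Pointwise, the integrand of `Ê` is the Kronecker product `(φ φᵀ) ⊗ E(μ)` with `φ = (Φᵢ(μ))ᵢ`,
whose quadratic form at `x = vec X` is `(Xφ)ᵀ E(μ) (Xφ)`. It is therefore almost surely
nonnegative, and `xᵀ Ê x` is its integral. If some row `z` of `X` is nonzero, then `Xφ ≠ 0`
wherever `∑ zᵢ Φᵢ ≠ 0`, a set of positive measure on which the quadratic form is positive
(since `E(μ)` is a.s. positive definite), so the integral is positive.
-/

theorem Matrix.vec_dotProduct_kronecker_vecMulVec_mulVec_vec {R m n : Type*} [CommSemiring R]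
    [Fintype m] [Fintype n] (φ : m → R) (A : Matrix n n R) (X : Matrix n m R) :
    vec X ⬝ᵥ ((vecMulVec φ φ ⊗ₖ A) *ᵥ vec X) = (X *ᵥ φ) ⬝ᵥ (A *ᵥ (X *ᵥ φ)) := by
  rw [kronecker_mulVec_vec, vec_dotProduct_vec, transpose_vecMulVec, Matrix.mul_assoc,
    mul_vecMulVec, mul_vecMulVec, mul_vecMulVec, trace_vecMulVec, mulVec_transpose,
    ← dotProduct_mulVec, dotProduct_comm]

section Integral

variable {Ω ι : Type*} [MeasurableSpace Ω] {P : Measure Ω} [Fintype ι]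

theorem Matrix.integrable_dotProduct_mulVec {M : Ω → Matrix ι ι ℝ}
    (hM : ∀ p q, Integrable (fun ω => M ω p q) P) (x : ι → ℝ) :
    Integrable (fun ω => x ⬝ᵥ (M ω *ᵥ x)) P :=
  integrable_finsetSum _ fun p _ =>
    (integrable_finsetSum _ fun q _ => (hM p q).mul_const (x q)).const_mul (x p)

theorem Matrix.dotProduct_mulVec_integral {M : Ω → Matrix ι ι ℝ}
    (hM : ∀ p q, Integrable (fun ω => M ω p q) P) (x : ι → ℝ) :
    x ⬝ᵥ (of (fun p q => ∫ ω, M ω p q ∂P) *ᵥ x) = ∫ ω, x ⬝ᵥ (M ω *ᵥ x) ∂P := by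
  simp only [dotProduct, mulVec, of_apply]
  rw [integral_finsetSum _ fun p _ =>
    (integrable_finsetSum _ fun q _ => (hM p q).mul_const (x q)).const_mul (x p)]
  refine Finset.sum_congr rfl fun p _ => ?_
  rw [integral_const_mul, integral_finsetSum _ fun q _ => (hM p q).mul_const (x q)]
  simp only [integral_mul_const]

omit [Fintype ι] in
theorem Matrix.isHermitian_integral {M : Ω → Matrix ι ι ℝ}
    (hM : ∀ᵐ ω ∂P, (M ω).IsHermitian) : (of fun p q => ∫ ω, M ω p q ∂P).IsHermitian := by
  ext p q
  refine integral_congr_ae ?_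
  filter_upwards [hM] with ω hω
  exact hω.apply p q

theorem Matrix.posDef_integral {M : Ω → Matrix ι ι ℝ}
    (hM : ∀ p q, Integrable (fun ω => M ω p q) P) (hpsd : ∀ᵐ ω ∂P, (M ω).PosSemidef)
    (hpos : ∀ x : ι → ℝ, x ≠ 0 → 0 < P {ω | 0 < x ⬝ᵥ (M ω *ᵥ x)}) :
    (of fun p q => ∫ ω, M ω p q ∂P).PosDef := by
  refine posDef_iff_dotProduct_mulVec.mpr ⟨isHermitian_integral (hpsd.mono fun _ h => h.1), ?_⟩
  intro x hx
  have hnonneg : 0 ≤ᵐ[P] fun ω => x ⬝ᵥ (M ω *ᵥ x) := by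
    filter_upwards [hpsd] with ω hω
    simpa using hω.dotProduct_mulVec_nonneg x
  rw [star_trivial, dotProduct_mulVec_integral hM,
    integral_pos_iff_support_of_nonneg_ae hnonneg (integrable_dotProduct_mulVec hM x)]
  exact (hpos x hx).trans_le (measure_mono fun ω h => h.ne')

end Integral

theorem stmt_5_general {Ω : Type*} [MeasurableSpace Ω] (P : Measure Ω) {m n : ℕ}
    (Φ : Fin m → Ω → ℝ)
    (hind : ∀ z : Fin m → ℝ, z ≠ 0 →
      0 < P {ω | (∑ i, z i * Φ i ω) ≠ 0})
    (E : Ω → Matrix (Fin n) (Fin n) ℝ)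
    (hint : ∀ i j : Fin m, ∀ a b : Fin n,
      Integrable (fun ω => Φ i ω * Φ j ω * E ω a b) P)
    (hposdef : ∀ᵐ ω ∂P, (E ω).PosDef) :
    (Matrix.of (fun p q : Fin m × Fin n =>
      ∫ ω, Φ p.1 ω * Φ q.1 ω * E ω p.2 q.2 ∂P)).PosDef := by
  let φ : Ω → Fin m → ℝ := fun ω i => Φ i ω
  refine posDef_integral (M := fun ω => vecMulVec (φ ω) (φ ω) ⊗ₖ E ω)
    (fun p q => hint p.1 q.1 p.2 q.2)
    (hposdef.mono fun ω hω => by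
      simpa using (posSemidef_vecMulVec_self_star (φ ω)).kronecker hω.posSemidef) ?_
  intro x hx
  let X : Matrix (Fin n) (Fin m) ℝ := of fun a i => x (i, a)
  obtain ⟨⟨i, a⟩, hxia⟩ := Function.ne_iff.mp hx
  have hXa : X a ≠ 0 := fun h => hxia (congrFun h i)
  refine (hind (X a) hXa).trans_le (measure_mono_ae ?_)
  filter_upwards [hposdef] with ω hω hωa
  have hXφ : X *ᵥ φ ω ≠ 0 := fun h => hωa (congrFun h a)
  show 0 < vec X ⬝ᵥ ((vecMulVec (φ ω) (φ ω) ⊗ₖ E ω) *ᵥ vec X)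
  rw [vec_dotProduct_kronecker_vecMulVec_mulVec_vec]
  simpa using hω.dotProduct_mulVec_pos hXφ

/-- If `E(μ)` is symmetric positive definite for almost every `μ`, then its
stochastic Galerkin projection `Ê`, the block matrix with `(i,j)`-th block
`𝔼[Φᵢ Φⱼ E]`, is symmetric positive definite. -/
theorem stmt_5 {Ω : Type*} [MeasurableSpace Ω] (P : Measure Ω)
    [IsProbabilityMeasure P] {m n : ℕ}
    (Φ : Fin m → Ω → ℝ) (hΦ : ∀ i, MemLp (Φ i) 2 P)
    (hind : ∀ z : Fin m → ℝ, z ≠ 0 →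
      0 < P {ω | (∑ i, z i * Φ i ω) ≠ 0})
    (E : Ω → Matrix (Fin n) (Fin n) ℝ)
    (hmeas : ∀ a b : Fin n, Measurable fun ω => E ω a b)
    (hint : ∀ i j : Fin m, ∀ a b : Fin n,
      Integrable (fun ω => Φ i ω * Φ j ω * E ω a b) P)
    (hposdef : ∀ᵐ ω ∂P, (E ω).PosDef) :
    (Matrix.of (fun p q : Fin m × Fin n =>
      ∫ ω, Φ p.1 ω * Φ q.1 ω * E ω p.2 q.2 ∂P)).PosDef :=
  stmt_5_general P Φ hind E hint hposdef
end

section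
/- Let (𝓜, 𝔉, P) be a probability space, let Φ₁, …, Φ_m : 𝓜 → ℝ be square-integrable functions such that for every nonzero z ∈ ℝ^m the function Σ_{i=1}^m z_i Φ_i is nonzero on a set of positive P-measure, and let E, A : 𝓜 → ℝ^{n×n} be measurable with all entries of Φ_i Φ_j E and Φ_i Φ_j A integrable. Suppose that for P-almost every μ, E(μ) is symmetric positive definite and A(μ) + A(μ)ᵀ is negative definite (the parameter-dependent system is dissipative almost everywhere). Then the stochastic Galerkin matrices Ê, Â ∈ ℝ^{mn×mn} with blocks Ê_{ij} = 𝔼[Φ_i Φ_j E] and Â_{ij} = 𝔼[Φ_i Φ_j A] satisfy: Ê is symmetric positive definite and Â + Âᵀ is negative definite; consequently, for any V ∈ ℝ^{mn×r} of full column rank, every eigenvalue λ ∈ ℂ of the reduced pencil (Vᵀ Ê V, Vᵀ Â V) (i.e., det(λ·Vᵀ Ê V − Vᵀ Â V) = 0 over ℂ) satisfies Re(λ) < 0. -/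
/-!
The quadratic form of the Galerkin matrix of a matrix field `M` at `x = (x₁, …, x_m)` is the
expectation of the quadratic form of `M(ω)` at the random vector `∑ᵢ Φᵢ(ω) xᵢ`. If `M` is a.e.
positive definite, this integrand is nonnegative, and when `x ≠ 0` it is positive wherever
`∑ᵢ Φᵢ (xᵢ)_a ≠ 0` for a component `a` with some `(xᵢ)_a ≠ 0`, a set of positive measure by the
independence hypothesis on the `Φᵢ`. Applied to `E` and to `-(A + Aᵀ)`, whose Galerkin matrix is
`-(Â + Âᵀ)`, this makes `(Ê, Â)` dissipative, and the congruence `X ↦ Vᵀ X V` with `V` injective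
preserves dissipativity. Finally, if `(λE - A)v = 0` with `v ≠ 0`, then `λ v*Ev = v*Av`, where
`v*Ev > 0` and `2 Re v*Av = v*(A + Aᴴ)v < 0`, so `Re λ < 0`.
-/

open Matrix MeasureTheory

open scoped ComplexOrder MatrixOrder

namespace Matrix

variable {n : Type*} [Fintype n]

theorem mulVec_injective_of_rank_eq {K m : Type*} [Field K] [Fintype m] {V : Matrix m n K}
    (hV : V.rank = Fintype.card n) : Function.Injective V.mulVec := by
  rw [mulVec_injective_iff, linearIndependent_iff_card_eq_finrank_span, ← hV,
    rank_eq_finrank_span_cols, Set.finrank]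

theorem PosDef.transpose_mul_mul_same_of_rank_eq {K m : Type*} [Field K] [PartialOrder K]
    [StarRing K] [TrivialStar K] [Fintype m] {M : Matrix m m K} (hM : M.PosDef)
    {V : Matrix m n K} (hV : V.rank = Fintype.card n) : (Vᵀ * M * V).PosDef := by
  simpa only [conjTranspose_eq_transpose_of_trivial] using
    hM.conjTranspose_mul_mul_same (mulVec_injective_of_rank_eq hV)

theorem PosDef.map_ofReal_s6 [DecidableEq n] {M : Matrix n n ℝ} (hM : M.PosDef) :
    (M.map Complex.ofReal).PosDef := by
  -- A real square root `S` makes the complexification a Gram matrix; its determinant is `det M`.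
  obtain ⟨S, rfl⟩ : ∃ S : Matrix n n ℝ, Sᴴ * S = M :=
    ⟨CFC.sqrt M, by
      rw [← star_eq_conjTranspose, (CFC.sqrt_nonneg M).isSelfAdjoint.star_eq]
      exact CFC.sqrt_mul_sqrt_self M hM.posSemidef.nonneg⟩
  have hsemi : ((Sᴴ * S).map Complex.ofReal).PosSemidef := by
    have := posSemidef_conjTranspose_mul_self (S.map Complex.ofReal)
    rw [← conjTranspose_map _ fun _ => by simp] at this
    exact Matrix.map_mul (L := Sᴴ) (M := S) (f := Complex.ofRealHom) ▸ this
  have hdet : ((Sᴴ * S).map Complex.ofReal).det = (Sᴴ * S).det :=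
    (Complex.ofRealHom.map_det _).symm
  rw [hsemi.posDef_iff_det_ne_zero, hdet]
  exact Complex.ofReal_ne_zero.mpr hM.det_pos.ne'

theorem re_star_dotProduct_conjTranspose_mulVec {𝕜 : Type*} [RCLike 𝕜] (A : Matrix n n 𝕜)
    (v : n → 𝕜) : RCLike.re (star v ⬝ᵥ Aᴴ *ᵥ v) = RCLike.re (star v ⬝ᵥ A *ᵥ v) := by
  rw [dotProduct_mulVec, ← star_mulVec, star_dotProduct, RCLike.star_def, RCLike.conj_re]

theorem re_neg_of_det_smul_sub_eq_zero_s6 {𝕜 : Type*} [RCLike 𝕜] [DecidableEq n]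
    {E A : Matrix n n 𝕜} (hE : E.PosDef) (hA : (-(A + Aᴴ)).PosDef) {lam : 𝕜}
    (hdet : (lam • E - A).det = 0) : RCLike.re lam < 0 := by
  obtain ⟨v, hv, hker⟩ := exists_mulVec_eq_zero_iff.mpr hdet
  have heig : lam * (star v ⬝ᵥ E *ᵥ v) = star v ⬝ᵥ A *ᵥ v := by
    rw [sub_mulVec, sub_eq_zero, smul_mulVec] at hker
    rw [← hker, dotProduct_smul, smul_eq_mul]
  obtain ⟨hEre, hEim⟩ := RCLike.pos_iff.mp (hE.dotProduct_mulVec_pos hv)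
  have hAre : RCLike.re (star v ⬝ᵥ A *ᵥ v) < 0 := by
    have := hA.re_dotProduct_pos hv
    rw [neg_mulVec, add_mulVec, dotProduct_neg, dotProduct_add, map_neg, map_add,
      re_star_dotProduct_conjTranspose_mulVec] at this
    linarith
  rw [← heig, RCLike.mul_re, hEim, mul_zero, sub_zero] at hAre
  exact neg_of_mul_neg_left hAre hEre.le

theorem re_neg_of_det_smul_map_ofReal_sub_eq_zero [DecidableEq n] {E A : Matrix n n ℝ}
    (hE : E.PosDef) (hA : (-(A + Aᵀ)).PosDef) {lam : ℂ}
    (hdet : (lam • E.map Complex.ofReal - A.map Complex.ofReal).det = 0) : lam.re < 0 := by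
  have hAc : -(A.map Complex.ofReal + (A.map Complex.ofReal)ᴴ)
      = (-(A + Aᵀ)).map Complex.ofReal := by
    ext i j
    simp
  exact re_neg_of_det_smul_sub_eq_zero_s6 hE.map_ofReal_s6 (hAc ▸ hA.map_ofReal_s6) hdet

end Matrix

section Expansion

variable {Ω ι κ : Type*} [Fintype ι] [Fintype κ]

-- `x : ι × κ → ℝ` is the block vector `(x_i)_{i : ι}`, and this is `∑ i, Φ i ω • x_i`.
def galerkinExpansion (Φ : ι → Ω → ℝ) (x : ι × κ → ℝ) (ω : Ω) : κ → ℝ :=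
  fun a => ∑ i, x (i, a) * Φ i ω

theorem dotProduct_mulVec_galerkinExpansion (Φ : ι → Ω → ℝ) (M : Matrix κ κ ℝ)
    (x : ι × κ → ℝ) (ω : Ω) :
    galerkinExpansion Φ x ω ⬝ᵥ M *ᵥ galerkinExpansion Φ x ω
      = ∑ p, ∑ q, x p * x q * (Φ p.1 ω * Φ q.1 ω * M p.2 q.2) := by
  simp only [galerkinExpansion, dotProduct, mulVec, Fintype.sum_prod_type_right,
    Finset.sum_mul, Finset.mul_sum]
  refine Finset.sum_congr rfl fun a _ => ?_
  rw [eq_comm, Finset.sum_comm]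
  refine Finset.sum_congr rfl fun b _ => ?_
  rw [Finset.sum_comm]
  exact Finset.sum_congr rfl fun j _ => Finset.sum_congr rfl fun i _ => by ring

end Expansion

section Galerkin

variable {Ω ι κ : Type*} [MeasurableSpace Ω] {P : Measure Ω} {Φ : ι → Ω → ℝ}

variable (P Φ) in
noncomputable def galerkinMatrix (M : Ω → Matrix κ κ ℝ) : Matrix (ι × κ) (ι × κ) ℝ :=
  Matrix.of fun p q => ∫ ω, Φ p.1 ω * Φ q.1 ω * M ω p.2 q.2 ∂P

variable (P Φ) in
def GalerkinIntegrable (M : Ω → Matrix κ κ ℝ) : Prop :=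
  ∀ p q : ι × κ, Integrable (fun ω => Φ p.1 ω * Φ q.1 ω * M ω p.2 q.2) P

namespace GalerkinIntegrable

variable {M N : Ω → Matrix κ κ ℝ}

theorem transpose (hM : GalerkinIntegrable P Φ M) :
    GalerkinIntegrable P Φ fun ω => (M ω)ᵀ := fun p q => by
  simpa only [transpose_apply, mul_comm (Φ p.1 _)] using hM q p

theorem neg (hM : GalerkinIntegrable P Φ M) : GalerkinIntegrable P Φ (-M) := fun p q => by
  simp only [Pi.neg_apply, Matrix.neg_apply, mul_neg]
  exact (hM p q).neg

theorem add (hM : GalerkinIntegrable P Φ M) (hN : GalerkinIntegrable P Φ N) :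
    GalerkinIntegrable P Φ (M + N) := fun p q => by
  simp only [Pi.add_apply, Matrix.add_apply, mul_add]
  exact (hM p q).add (hN p q)

end GalerkinIntegrable

theorem galerkinMatrix_congr_ae {M N : Ω → Matrix κ κ ℝ} (h : M =ᵐ[P] N) :
    galerkinMatrix P Φ M = galerkinMatrix P Φ N := by
  ext p q
  exact integral_congr_ae (h.mono fun ω hω => by simp only [hω])

theorem galerkinMatrix_transpose (M : Ω → Matrix κ κ ℝ) :
    galerkinMatrix P Φ (fun ω => (M ω)ᵀ) = (galerkinMatrix P Φ M)ᵀ := by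
  ext p q
  simp only [galerkinMatrix, transpose_apply, of_apply, mul_comm (Φ q.1 _)]

theorem galerkinMatrix_neg (M : Ω → Matrix κ κ ℝ) :
    galerkinMatrix P Φ (-M) = -galerkinMatrix P Φ M := by
  ext p q
  simp only [galerkinMatrix, of_apply, Matrix.neg_apply, Pi.neg_apply, mul_neg, integral_neg]

theorem galerkinMatrix_add {M N : Ω → Matrix κ κ ℝ} (hM : GalerkinIntegrable P Φ M)
    (hN : GalerkinIntegrable P Φ N) :
    galerkinMatrix P Φ (M + N) = galerkinMatrix P Φ M + galerkinMatrix P Φ N := by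
  ext p q
  simp only [galerkinMatrix, of_apply, Matrix.add_apply, Pi.add_apply, mul_add]
  exact integral_add (hM p q) (hN p q)

variable [Fintype ι] [Fintype κ] {M : Ω → Matrix κ κ ℝ}

theorem integrable_galerkinExpansion_quadratic (hM : GalerkinIntegrable P Φ M)
    (x : ι × κ → ℝ) :
    Integrable (fun ω => galerkinExpansion Φ x ω ⬝ᵥ M ω *ᵥ galerkinExpansion Φ x ω) P := by
  simp only [dotProduct_mulVec_galerkinExpansion]
  exact integrable_finsetSum _ fun p _ => integrable_finsetSum _ fun q _ => (hM p q).const_mul _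

theorem dotProduct_galerkinMatrix_mulVec (hM : GalerkinIntegrable P Φ M) (x : ι × κ → ℝ) :
    x ⬝ᵥ galerkinMatrix P Φ M *ᵥ x
      = ∫ ω, galerkinExpansion Φ x ω ⬝ᵥ M ω *ᵥ galerkinExpansion Φ x ω ∂P := by
  simp only [dotProduct_mulVec_galerkinExpansion]
  rw [integral_finsetSum _ fun p _ => integrable_finsetSum _ fun q _ => (hM p q).const_mul _]
  simp only [integral_finsetSum _ fun q _ => (hM _ q).const_mul _, integral_const_mul,
    dotProduct, mulVec, galerkinMatrix, of_apply, Finset.mul_sum]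
  exact Finset.sum_congr rfl fun p _ => Finset.sum_congr rfl fun q _ => by ring

theorem galerkinMatrix_posDef
    (hind : ∀ z : ι → ℝ, z ≠ 0 → 0 < P {ω | ∑ i, z i * Φ i ω ≠ 0})
    (hM : GalerkinIntegrable P Φ M) (hpd : ∀ᵐ ω ∂P, (M ω).PosDef) :
    (galerkinMatrix P Φ M).PosDef := by
  refine PosDef.of_dotProduct_mulVec_pos ?_ fun x hx => ?_
  · have hsymm : (fun ω => (M ω)ᵀ) =ᵐ[P] M := hpd.mono fun ω h => h.isHermitian
    rw [IsHermitian, conjTranspose_eq_transpose_of_trivial, ← galerkinMatrix_transpose,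
      galerkinMatrix_congr_ae hsymm]
  obtain ⟨⟨i₀, a₀⟩, hx₀⟩ := Function.ne_iff.mp hx
  have hnonneg : 0 ≤ᵐ[P] fun ω => galerkinExpansion Φ x ω ⬝ᵥ M ω *ᵥ galerkinExpansion Φ x ω :=
    hpd.mono fun ω h => by simpa using h.posSemidef.dotProduct_mulVec_nonneg _
  rw [star_trivial, dotProduct_galerkinMatrix_mulVec hM,
    integral_pos_iff_support_of_nonneg_ae hnonneg (integrable_galerkinExpansion_quadratic hM x)]
  refine (hind (fun i => x (i, a₀)) fun h => hx₀ (congrFun h i₀)).trans_le (measure_mono_ae ?_)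
  filter_upwards [hpd] with ω hω hz
  exact Function.mem_support.mpr
    (by simpa using (hω.dotProduct_mulVec_pos fun h => hz (congrFun h a₀)).ne')

end Galerkin

theorem stmt_6_general {Ω : Type*} [MeasurableSpace Ω] (P : Measure Ω) {m n : ℕ}
    (Φ : Fin m → Ω → ℝ)
    (hind : ∀ z : Fin m → ℝ, z ≠ 0 →
      0 < P {ω | (∑ i, z i * Φ i ω) ≠ 0})
    (E A : Ω → Matrix (Fin n) (Fin n) ℝ)
    (hintE : ∀ i j : Fin m, ∀ a b : Fin n,
      Integrable (fun ω => Φ i ω * Φ j ω * E ω a b) P)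
    (hintA : ∀ i j : Fin m, ∀ a b : Fin n,
      Integrable (fun ω => Φ i ω * Φ j ω * A ω a b) P)
    (hdiss : ∀ᵐ ω ∂P, (E ω).PosDef ∧ (-(A ω + (A ω)ᵀ)).PosDef) :
    (Matrix.of (fun p q : Fin m × Fin n =>
        ∫ ω, Φ p.1 ω * Φ q.1 ω * E ω p.2 q.2 ∂P)).PosDef ∧
    (-((Matrix.of (fun p q : Fin m × Fin n =>
          ∫ ω, Φ p.1 ω * Φ q.1 ω * A ω p.2 q.2 ∂P))
        + (Matrix.of (fun p q : Fin m × Fin n =>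
          ∫ ω, Φ p.1 ω * Φ q.1 ω * A ω p.2 q.2 ∂P))ᵀ)).PosDef ∧
    ∀ r : ℕ, ∀ V : Matrix (Fin m × Fin n) (Fin r) ℝ, V.rank = r →
      ∀ lam : ℂ,
        (lam • (Vᵀ * (Matrix.of (fun p q : Fin m × Fin n =>
              ∫ ω, Φ p.1 ω * Φ q.1 ω * E ω p.2 q.2 ∂P)) * V).map (Complex.ofReal)
          - (Vᵀ * (Matrix.of (fun p q : Fin m × Fin n =>
              ∫ ω, Φ p.1 ω * Φ q.1 ω * A ω p.2 q.2 ∂P)) * V).map (Complex.ofReal)).det = 0 →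
        lam.re < 0 := by
  have hE : GalerkinIntegrable P Φ E := fun p q => hintE _ _ _ _
  have hA : GalerkinIntegrable P Φ A := fun p q => hintA _ _ _ _
  set Ê := galerkinMatrix P Φ E
  set Â := galerkinMatrix P Φ A
  have hÊ : Ê.PosDef := galerkinMatrix_posDef hind hE (hdiss.mono fun _ h => h.1)
  have hÂ : (-(Â + Âᵀ)).PosDef := by
    rw [← galerkinMatrix_transpose, ← galerkinMatrix_add hA hA.transpose,
      ← galerkinMatrix_neg]
    exact galerkinMatrix_posDef hind (hA.add hA.transpose).neg (hdiss.mono fun _ h => h.2)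
  refine ⟨hÊ, hÂ, fun r V hV lam => ?_⟩
  replace hV : V.rank = Fintype.card (Fin r) := hV.trans (Fintype.card_fin r).symm
  have hreduce : Vᵀ * (-(Â + Âᵀ)) * V = -(Vᵀ * Â * V + (Vᵀ * Â * V)ᵀ) := by
    simp only [Matrix.mul_neg, Matrix.neg_mul, Matrix.mul_add, Matrix.add_mul, transpose_mul,
      transpose_transpose, Matrix.mul_assoc]
  exact re_neg_of_det_smul_map_ofReal_sub_eq_zero (hÊ.transpose_mul_mul_same_of_rank_eq hV)
    (hreduce ▸ hÂ.transpose_mul_mul_same_of_rank_eq hV)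

/-- If the parameter-dependent system `(E(μ), A(μ))` is dissipative almost
everywhere, then the stochastic Galerkin system `(Ê, Â)` is dissipative, and
any Galerkin-type reduction with a full-column-rank projection matrix `V`
yields a pencil whose eigenvalues all have negative real part. -/
theorem stmt_6 {Ω : Type*} [MeasurableSpace Ω] (P : Measure Ω)
    [IsProbabilityMeasure P] {m n : ℕ}
    (Φ : Fin m → Ω → ℝ) (hΦ : ∀ i, MemLp (Φ i) 2 P)
    (hind : ∀ z : Fin m → ℝ, z ≠ 0 →
      0 < P {ω | (∑ i, z i * Φ i ω) ≠ 0})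
    (E A : Ω → Matrix (Fin n) (Fin n) ℝ)
    (hmeasE : ∀ a b : Fin n, Measurable fun ω => E ω a b)
    (hmeasA : ∀ a b : Fin n, Measurable fun ω => A ω a b)
    (hintE : ∀ i j : Fin m, ∀ a b : Fin n,
      Integrable (fun ω => Φ i ω * Φ j ω * E ω a b) P)
    (hintA : ∀ i j : Fin m, ∀ a b : Fin n,
      Integrable (fun ω => Φ i ω * Φ j ω * A ω a b) P)
    (hdiss : ∀ᵐ ω ∂P, (E ω).PosDef ∧ (-(A ω + (A ω)ᵀ)).PosDef) :
    (Matrix.of (fun p q : Fin m × Fin n =>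
        ∫ ω, Φ p.1 ω * Φ q.1 ω * E ω p.2 q.2 ∂P)).PosDef ∧
    (-((Matrix.of (fun p q : Fin m × Fin n =>
          ∫ ω, Φ p.1 ω * Φ q.1 ω * A ω p.2 q.2 ∂P))
        + (Matrix.of (fun p q : Fin m × Fin n =>
          ∫ ω, Φ p.1 ω * Φ q.1 ω * A ω p.2 q.2 ∂P))ᵀ)).PosDef ∧
    ∀ r : ℕ, ∀ V : Matrix (Fin m × Fin n) (Fin r) ℝ, V.rank = r →
      ∀ lam : ℂ,
        (lam • (Vᵀ * (Matrix.of (fun p q : Fin m × Fin n =>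
              ∫ ω, Φ p.1 ω * Φ q.1 ω * E ω p.2 q.2 ∂P)) * V).map (Complex.ofReal)
          - (Vᵀ * (Matrix.of (fun p q : Fin m × Fin n =>
              ∫ ω, Φ p.1 ω * Φ q.1 ω * A ω p.2 q.2 ∂P)) * V).map (Complex.ofReal)).det = 0 →
        lam.re < 0 :=
  stmt_6_general P Φ hind E A hintE hintA hdiss
end

section
/- Let E, A ∈ ℝ^{n×n}, let M ∈ ℝ^{n×n} satisfy the Lyapunov equation Aᵀ M E + Eᵀ M A + I_n = 0, and let M̃ ∈ ℝ^{n×n} be symmetric with ‖M̃ − M‖ < 1 / (‖Aᵀ‖·‖E‖ + ‖A‖·‖Eᵀ‖), where ‖·‖ denotes the operator norm induced by the Euclidean vector norm. Then M̃ solves the Lyapunov inequality, i.e., the symmetric matrix Aᵀ M̃ E + Eᵀ M̃ A is negative definite. -/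
/-!
Since `M` solves the Lyapunov equation, `1 + (Aᵀ M̃ E + Eᵀ M̃ A)` is the Lyapunov operator
applied to `M̃ - M`, so its spectral norm is at most `(‖Aᵀ‖‖E‖ + ‖A‖‖Eᵀ‖)‖M̃ - M‖ < 1`.
A symmetric `S` with `‖1 - S‖ < 1` is positive definite, because
`xᵀ S x = ‖x‖² - xᵀ (1 - S) x ≥ (1 - ‖1 - S‖)‖x‖²`.
-/

open Matrix

/-- The operator norm of a square real matrix induced by the Euclidean vector
norm (spectral norm). -/
noncomputable def l2OpNorm {n : ℕ} (M : Matrix (Fin n) (Fin n) ℝ) : ℝ :=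
  ‖(Matrix.toEuclideanCLM (𝕜 := ℝ) M)‖

open scoped Matrix.Norms.L2Operator

lemma l2OpNorm_eq_norm {n : ℕ} (M : Matrix (Fin n) (Fin n) ℝ) : l2OpNorm M = ‖M‖ := rfl

lemma norm_mul_mul_add_mul_mul_le {R : Type*} [SeminormedRing R] (a b c d x : R) :
    ‖a * x * b + c * x * d‖ ≤ (‖a‖ * ‖b‖ + ‖c‖ * ‖d‖) * ‖x‖ :=
  calc ‖a * x * b + c * x * d‖ ≤ ‖a‖ * ‖x‖ * ‖b‖ + ‖c‖ * ‖x‖ * ‖d‖ := by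
        grw [norm_add_le, norm_mul₃_le, norm_mul₃_le]
    _ = (‖a‖ * ‖b‖ + ‖c‖ * ‖d‖) * ‖x‖ := by ring

namespace Matrix

lemma IsSymm.transpose_mul_mul_add {n R : Type*} [Fintype n] [CommSemiring R]
    {X : Matrix n n R} (hX : X.IsSymm) (A E : Matrix n n R) : (Aᵀ * X * E + Eᵀ * X * A).IsSymm := by
  simp only [IsSymm, transpose_add, transpose_mul, transpose_transpose, hX.eq, Matrix.mul_assoc]
  exact add_comm _ _

variable {n : Type*} [Fintype n] [DecidableEq n]

lemma dotProduct_mulVec_le_l2_opNorm_mul (R : Matrix n n ℝ) (x : n → ℝ) :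
    x ⬝ᵥ R *ᵥ x ≤ ‖R‖ * (x ⬝ᵥ x) := by
  set y : EuclideanSpace ℝ n := WithLp.toLp 2 x
  have hquad : x ⬝ᵥ R *ᵥ x = inner ℝ y (toEuclideanCLM (𝕜 := ℝ) R y) :=
    (inner_toEuclideanCLM R y y).symm
  have hsq : x ⬝ᵥ x = ‖y‖ * ‖y‖ := by
    rw [← real_inner_self_eq_norm_mul_norm, EuclideanSpace.inner_eq_star_dotProduct]; simp [y]
  rw [hquad, hsq]
  calc inner ℝ y (toEuclideanCLM (𝕜 := ℝ) R y) ≤ ‖y‖ * ‖toEuclideanCLM (𝕜 := ℝ) R y‖ :=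
        real_inner_le_norm _ _
    _ ≤ ‖y‖ * (‖R‖ * ‖y‖) := by gcongr; exact (toEuclideanCLM (𝕜 := ℝ) R).le_opNorm y
    _ = ‖R‖ * (‖y‖ * ‖y‖) := by ring

lemma posDef_of_l2_opNorm_one_sub_lt_one {S : Matrix n n ℝ} (hS : S.IsHermitian)
    (h : ‖1 - S‖ < 1) : S.PosDef := by
  refine posDef_iff_dotProduct_mulVec.mpr ⟨hS, fun x hx => ?_⟩
  have hxx : 0 < x ⬝ᵥ x := by simpa using dotProduct_star_self_pos_iff.mpr hx
  have hsplit : x ⬝ᵥ S *ᵥ x = x ⬝ᵥ x - x ⬝ᵥ (1 - S) *ᵥ x := by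
    simp [sub_mulVec, dotProduct_sub]
  calc (0 : ℝ) < x ⬝ᵥ x - ‖1 - S‖ * (x ⬝ᵥ x) := by nlinarith
    _ ≤ star x ⬝ᵥ S *ᵥ x := by
        rw [star_trivial, hsplit]
        linarith [dotProduct_mulVec_le_l2_opNorm_mul (1 - S) x]

end Matrix

/-- If `M` solves the Lyapunov equation `Aᵀ M E + Eᵀ M A + I = 0` and the
symmetric matrix `M̃` satisfies `‖M̃ - M‖ < 1 / (‖Aᵀ‖‖E‖ + ‖A‖‖Eᵀ‖)` in the
operator norm induced by the Euclidean norm, then `M̃` solves the Lyapunov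
inequality, i.e. `Aᵀ M̃ E + Eᵀ M̃ A` is negative definite. -/
theorem stmt_12 {n : ℕ} (E A M Mt : Matrix (Fin n) (Fin n) ℝ)
    (hM : Aᵀ * M * E + Eᵀ * M * A + 1 = 0)
    (hMt : Mt.IsSymm)
    (hclose : l2OpNorm (Mt - M) <
      1 / (l2OpNorm Aᵀ * l2OpNorm E + l2OpNorm A * l2OpNorm Eᵀ)) :
    (-(Aᵀ * Mt * E + Eᵀ * Mt * A)).PosDef := by
  simp only [l2OpNorm_eq_norm] at hclose
  have hc : 0 < ‖Aᵀ‖ * ‖E‖ + ‖A‖ * ‖Eᵀ‖ := one_div_pos.mp ((norm_nonneg _).trans_lt hclose)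
  have hdefect : 1 - -(Aᵀ * Mt * E + Eᵀ * Mt * A) = Aᵀ * (Mt - M) * E + Eᵀ * (Mt - M) * A := by
    rw [eq_neg_of_add_eq_zero_right hM]
    simp only [Matrix.mul_sub, Matrix.sub_mul]
    abel
  refine posDef_of_l2_opNorm_one_sub_lt_one ?_ ?_
  · exact isHermitian_iff_isSymm.mpr (hMt.transpose_mul_mul_add A E).neg
  · rw [hdefect]
    calc _ ≤ (‖Aᵀ‖ * ‖E‖ + ‖Eᵀ‖ * ‖A‖) * ‖Mt - M‖ :=
          norm_mul_mul_add_mul_mul_le Aᵀ E Eᵀ A (Mt - M)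
      _ < 1 := by rw [mul_comm ‖Eᵀ‖]; exact (lt_div_iff₀' hc).mp hclose
end
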